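/- Let n ≥ 1, ω_0,...,ω_n > 0, r ≥ 1, and regard each h^n_i as a function of t on (0,1). Then for every i with 1 ≤ i ≤ n and every t ∈ (0,1), the r-th derivative satisfies (h^n_i)^{(r)}(t) · (ω_{i-1}·i·(1-t) + ω_i·t·(n-i+1)·h^n_{i-1}(t)) = ω_i·(n-i+1)·[t·(h^n_{i-1})^{(r)}(t) + r·(h^n_{i-1})^{(r-1)}(t) - Σ_{j=1}^{r} C(r,j)·(h^n_i)^{(r-j)}(t)·(t·(h^n_{i-1})^{(j)}(t) + j·(h^n_{i-1})^{(j-1)}(t))] + ω_{i-1}·i·r·(h^n_i)^{(r-1)}(t), where (h^n_0)^{(k)} ≡ 0 for all k ≥ 1. -/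

import Mathlib

open Finset

/-- The `k`-th Bernstein polynomial of degree `n`. -/
noncomputable def bern (n k : ℕ) (t : ℝ) : ℝ :=
  (n.choose k : ℝ) * t ^ k * (1 - t) ^ (n - k)

/-- The quantity `h^n_i(t)`, with `h^n_0(t) := 1`. -/
noncomputable def hfun (n : ℕ) (ω : ℕ → ℝ) (i : ℕ) (t : ℝ) : ℝ :=
  if i = 0 then 1
  else ω i * bern n i t / ∑ k ∈ range (i + 1), ω k * bern n k t

lemma mysmooth_iter {f : ℝ → ℝ} {s : Set ℝ} (hs : IsOpen s) (hf : ContDiffOn ℝ (⊤ : ℕ∞) f s) :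
    ∀ j, ContDiffOn ℝ (⊤ : ℕ∞) (iteratedDeriv j f) s := by
  intro j
  induction j with
  | zero => simpa [iteratedDeriv_zero] using hf
  | succ j ih =>
      rw [iteratedDeriv_succ]
      exact ih.deriv_of_isOpen hs (mod_cast le_top)

lemma mydiff_iter {f : ℝ → ℝ} {s : Set ℝ} (hs : IsOpen s) (hf : ContDiffOn ℝ (⊤ : ℕ∞) f s)
    {t : ℝ} (ht : t ∈ s) (j : ℕ) : DifferentiableAt ℝ (iteratedDeriv j f) t :=
  ((mysmooth_iter hs hf j).differentiableOn (by simp)).differentiableAt (hs.mem_nhds ht)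

-- abstract combinatorial step
lemma mycomb (r : ℕ) (a b : ℕ → ℝ) :
    ∑ j ∈ range (r+1), (r.choose j : ℝ) * (a (j+1) * b (r-j) + a j * b (r+1-j))
      = ∑ j ∈ range (r+2), ((r+1).choose j : ℝ) * a j * b (r+1-j) := by
  rw [Finset.sum_range_succ' (fun j => ((r+1).choose j : ℝ) * a j * b (r+1-j)) (r+1)]
  simp only [Nat.choose_succ_succ, Nat.cast_add, Nat.succ_sub_succ]
  rw [Finset.sum_congr rfl (fun j hj => by ring :
    ∀ j ∈ range (r+1), ((r.choose j : ℝ) + (r.choose (j+1) : ℝ)) * a (j+1) * b (r-j)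
      = (r.choose j : ℝ) * a (j+1) * b (r-j) + (r.choose (j+1) : ℝ) * a (j+1) * b (r-j)),
    Finset.sum_add_distrib]
  have h2 : ∑ j ∈ range (r+1), (r.choose (j+1) : ℝ) * a (j+1) * b (r-j)
      = ∑ j ∈ range r, (r.choose (j+1) : ℝ) * a (j+1) * b (r-j) := by
    rw [Finset.sum_range_succ]; simp
  have h3 : ∑ j ∈ range (r+1), (r.choose j : ℝ) * (a j * b (r+1-j))
      = ∑ j ∈ range r, (r.choose (j+1) : ℝ) * a (j+1) * b (r-j) + (r.choose 0 : ℝ) * a 0 * b (r+1) := by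
    rw [Finset.sum_range_succ' (fun j => (r.choose j : ℝ) * (a j * b (r+1-j))) r]
    simp only [Nat.succ_sub_succ, Nat.sub_zero]
    refine congrArg₂ _ (Finset.sum_congr rfl fun j hj => by ring) (by ring)
  rw [Finset.sum_congr rfl (fun j hj => by ring :
    ∀ j ∈ range (r+1), (r.choose j : ℝ) * (a (j+1) * b (r-j) + a j * b (r+1-j))
      = (r.choose j : ℝ) * a (j+1) * b (r-j) + (r.choose j : ℝ) * (a j * b (r+1-j))),
    Finset.sum_add_distrib, h3, h2]
  simp only [Nat.choose_zero_right, Nat.cast_one, one_mul, Nat.sub_zero]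
  ring

lemma myleibniz {f g : ℝ → ℝ} {s : Set ℝ} (hs : IsOpen s) (hf : ContDiffOn ℝ (⊤ : ℕ∞) f s)
    (hg : ContDiffOn ℝ (⊤ : ℕ∞) g s) (r : ℕ) :
    ∀ t ∈ s, iteratedDeriv r (fun x => f x * g x) t
      = ∑ j ∈ range (r+1), (r.choose j : ℝ) * iteratedDeriv j f t * iteratedDeriv (r-j) g t := by
  induction r with
  | zero => intro t ht; simp [iteratedDeriv_zero]
  | succ r ih =>
      intro t ht
      rw [iteratedDeriv_succ]
      have hev : iteratedDeriv r (fun x => f x * g x)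
          =ᶠ[nhds t] fun x => ∑ j ∈ range (r+1),
            (r.choose j : ℝ) * iteratedDeriv j f x * iteratedDeriv (r-j) g x := by
        filter_upwards [hs.mem_nhds ht] with x hx using ih x hx
      rw [hev.deriv_eq]
      rw [deriv_fun_sum (fun j hj => by
        exact ((mydiff_iter hs hf ht j).const_mul _).mul (mydiff_iter hs hg ht (r-j)))]
      have : ∀ j ∈ range (r+1),
          deriv (fun x => (r.choose j : ℝ) * iteratedDeriv j f x * iteratedDeriv (r-j) g x) t
          = (r.choose j : ℝ) * (iteratedDeriv (j+1) f t * iteratedDeriv (r-j) g t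
              + iteratedDeriv j f t * iteratedDeriv (r+1-j) g t) := by
        intro j hj
        have hj' : j ≤ r := Nat.lt_succ_iff.mp (Finset.mem_range.mp hj)
        rw [show (fun x => (r.choose j : ℝ) * iteratedDeriv j f x * iteratedDeriv (r-j) g x)
            = fun x => (r.choose j : ℝ) * (iteratedDeriv j f x * iteratedDeriv (r-j) g x) by
          funext x; ring]
        rw [deriv_const_mul (d := fun x => iteratedDeriv j f x * iteratedDeriv (r-j) g x) _ ((mydiff_iter hs hf ht j).mul (mydiff_iter hs hg ht (r-j))),
          deriv_fun_mul (mydiff_iter hs hf ht j) (mydiff_iter hs hg ht (r-j)),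
          ← iteratedDeriv_succ, ← iteratedDeriv_succ]
        have : r - j + 1 = r + 1 - j := by omega
        rw [this]
      rw [Finset.sum_congr rfl this]
      exact mycomb r (fun j => iteratedDeriv j f t) (fun j => iteratedDeriv j g t)

lemma myid_zero : ∀ m, iteratedDeriv m (fun _ : ℝ => (0:ℝ)) = fun _ => 0 := by
  intro m
  induction m with
  | zero => simp [iteratedDeriv_zero]
  | succ m ih => rw [iteratedDeriv_succ', deriv_const']; exact ih

lemma myid_const (c : ℝ) (m : ℕ) : iteratedDeriv (m+1) (fun _ : ℝ => c) = fun _ => 0 := by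
  rw [iteratedDeriv_succ', deriv_const']; exact myid_zero m

lemma myid_id (m : ℕ) : iteratedDeriv (m+2) (fun x : ℝ => x) = fun _ => 0 := by
  have : iteratedDeriv (m+2) (fun x : ℝ => x) = iteratedDeriv (m+1) (deriv fun x : ℝ => x) := by
    rw [iteratedDeriv_succ']
  rw [this, deriv_id'']
  exact myid_const 1 m

lemma myconstmul {h : ℝ → ℝ} {s : Set ℝ} (hs : IsOpen s) (hh : ContDiffOn ℝ (⊤ : ℕ∞) h s)
    (c : ℝ) (r : ℕ) : ∀ t ∈ s, iteratedDeriv r (fun x => c * h x) t = c * iteratedDeriv r h t := by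
  induction r with
  | zero => intro t ht; simp [iteratedDeriv_zero]
  | succ r ih =>
      intro t ht
      rw [iteratedDeriv_succ]
      have hev : iteratedDeriv r (fun x => c * h x) =ᶠ[nhds t] fun x => c * iteratedDeriv r h x := by
        filter_upwards [hs.mem_nhds ht] with x hx using ih x hx
      rw [hev.deriv_eq, deriv_const_mul _ (mydiff_iter hs hh ht r), ← iteratedDeriv_succ]

lemma myadd {f g : ℝ → ℝ} {s : Set ℝ} (hs : IsOpen s) (hf : ContDiffOn ℝ (⊤ : ℕ∞) f s)
    (hg : ContDiffOn ℝ (⊤ : ℕ∞) g s) (r : ℕ) :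
    ∀ t ∈ s, iteratedDeriv r (fun x => f x + g x) t = iteratedDeriv r f t + iteratedDeriv r g t := by
  induction r with
  | zero => intro t ht; simp [iteratedDeriv_zero]
  | succ r ih =>
      intro t ht
      rw [iteratedDeriv_succ]
      have hev : iteratedDeriv r (fun x => f x + g x)
          =ᶠ[nhds t] fun x => iteratedDeriv r f x + iteratedDeriv r g x := by
        filter_upwards [hs.mem_nhds ht] with x hx using ih x hx
      rw [hev.deriv_eq, deriv_fun_add (mydiff_iter hs hf ht r) (mydiff_iter hs hg ht r),
        ← iteratedDeriv_succ, ← iteratedDeriv_succ]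

lemma myxmul {h : ℝ → ℝ} {s : Set ℝ} (hs : IsOpen s) (hh : ContDiffOn ℝ (⊤ : ℕ∞) h s)
    (m : ℕ) {t : ℝ} (ht : t ∈ s) :
    iteratedDeriv (m+1) (fun x => x * h x) t
      = t * iteratedDeriv (m+1) h t + (m+1 : ℝ) * iteratedDeriv m h t := by
  have hid : ContDiffOn ℝ (⊤ : ℕ∞) (fun x : ℝ => x) s := contDiff_id.contDiffOn
  rw [myleibniz hs hid hh (m+1) t ht]
  rw [Finset.sum_range_succ' _ (m+1), Finset.sum_range_succ' _ m]
  have hz : ∀ j ∈ range m, ((m+1).choose (j+1+1) : ℝ) * iteratedDeriv (j+1+1) (fun x : ℝ => x) t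
      * iteratedDeriv (m+1-(j+1+1)) h t = 0 := by
    intro j hj
    rw [show j+1+1 = j+2 by ring, myid_id j]
    simp
  rw [Finset.sum_congr rfl hz, Finset.sum_const_zero]
  have h1 : iteratedDeriv (0+1) (fun x : ℝ => x) t = 1 := by
    rw [iteratedDeriv_one, deriv_id'']
  have h0 : iteratedDeriv 0 (fun x : ℝ => x) t = t := by rw [iteratedDeriv_zero]
  simp only [h1, h0]
  norm_num [Nat.choose_one_right]
  try ring

lemma myaffine (c : ℝ) (m : ℕ) (t : ℝ) :
    iteratedDeriv (m+1) (fun x : ℝ => c * (1 - x)) t = if m = 0 then -c else 0 := by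
  have hd : deriv (fun x : ℝ => c * (1 - x)) = fun _ => -c := by
    funext x
    have H : HasDerivAt (fun x : ℝ => c * (1 - x)) (c * (-1)) x :=
      ((hasDerivAt_id x).const_sub 1).const_mul c
    rw [H.deriv]; ring
  cases m with
  | zero => rw [iteratedDeriv_one, hd]; simp
  | succ m =>
      rw [iteratedDeriv_succ', hd, myid_const (-c) m]
      simp

lemma myevent {f g : ℝ → ℝ} {t : ℝ} (h : f =ᶠ[nhds t] g) (m : ℕ) :
    iteratedDeriv m f t = iteratedDeriv m g t := by
  induction m generalizing f g with
  | zero => simpa [iteratedDeriv_zero] using h.eq_of_nhds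
  | succ m ih =>
      rw [iteratedDeriv_succ', iteratedDeriv_succ']
      exact ih h.deriv

lemma bern_smooth (n k : ℕ) : ContDiff ℝ (⊤ : ℕ∞) (bern n k) := by
  unfold bern
  exact (contDiff_const.mul (contDiff_id.pow k)).mul ((contDiff_const.sub contDiff_id).pow (n-k))

lemma bern_pos {n k : ℕ} (hk : k ≤ n) {t : ℝ} (h0 : 0 < t) (h1 : t < 1) : 0 < bern n k t := by
  unfold bern
  have hc := Nat.choose_pos hk
  have h1' : (0:ℝ) < 1 - t := by linarith
  positivity

lemma S_pos (n : ℕ) (ω : ℕ → ℝ) (hω : ∀ k ≤ n, 0 < ω k) {i : ℕ} (hi : i ≤ n)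
    {t : ℝ} (h0 : 0 < t) (h1 : t < 1) :
    0 < ∑ k ∈ range (i+1), ω k * bern n k t := by
  refine Finset.sum_pos (fun k hk => ?_) ⟨0, Finset.mem_range.mpr (Nat.succ_pos i)⟩
  have hk' : k ≤ n := le_trans (Nat.lt_succ_iff.mp (Finset.mem_range.mp hk)) hi
  exact mul_pos (hω k hk') (bern_pos hk' h0 h1)

lemma hfun_eq (n : ℕ) (ω : ℕ → ℝ) (hω : ∀ k ≤ n, 0 < ω k) {i : ℕ} (hi : i ≤ n)
    {t : ℝ} (h0 : 0 < t) (h1 : t < 1) :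
    hfun n ω i t = ω i * bern n i t / ∑ k ∈ range (i + 1), ω k * bern n k t := by
  unfold hfun
  by_cases h : i = 0
  · subst h
    rw [if_pos rfl]
    have hsum : ∑ k ∈ range (0+1), ω k * bern n k t = ω 0 * bern n 0 t := by simp
    rw [hsum, div_self (ne_of_gt (mul_pos (hω 0 (Nat.zero_le n)) (bern_pos (Nat.zero_le n) h0 h1)))]
  · rw [if_neg h]

lemma hfun_smooth (n : ℕ) (ω : ℕ → ℝ) (hω : ∀ k ≤ n, 0 < ω k) {i : ℕ} (hi : i ≤ n) :
    ContDiffOn ℝ (⊤ : ℕ∞) (hfun n ω i) (Set.Ioo 0 1) := by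
  unfold hfun
  by_cases h : i = 0
  · subst h; simp only [if_pos rfl]; exact contDiffOn_const
  · simp only [if_neg h]
    refine ContDiffOn.div ((contDiff_const.mul (bern_smooth n i)).contDiffOn) ?_ ?_
    · exact (ContDiff.sum (fun k _ => contDiff_const.mul (bern_smooth n k))).contDiffOn
    · intro x hx
      exact ne_of_gt (S_pos n ω hω hi hx.1 hx.2)

lemma bern_ratio {n i : ℕ} (h1i : 1 ≤ i) (hin : i ≤ n) (x : ℝ) :
    (i:ℝ) * (1-x) * bern n i x = ((n:ℝ) - i + 1) * x * bern n (i-1) x := by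
  obtain ⟨m, rfl⟩ : ∃ m, i = m+1 := ⟨i-1, by omega⟩
  have hmn : m ≤ n := by omega
  have hc0 := Nat.choose_succ_right_eq n m
  have hc : ((n.choose (m+1) : ℕ) : ℝ) * ((m:ℝ)+1) = (n.choose m : ℝ) * ((n:ℝ) - m) := by
    have : ((n.choose (m+1) * (m+1) : ℕ) : ℝ) = ((n.choose m * (n-m) : ℕ) : ℝ) := by rw [hc0]
    push_cast [hmn] at this
    linarith
  unfold bern
  have e0 : m + 1 - 1 = m := rfl
  have e1 : n - m = (n - (m+1)) + 1 := by omega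
  rw [e0, e1, pow_succ]
  push_cast
  linear_combination (x^(m+1) * (1-x)^(n-(m+1)) * (1-x)) * hc

lemma key_identity (n : ℕ) (ω : ℕ → ℝ) (hω : ∀ k ≤ n, 0 < ω k) {i : ℕ}
    (h1i : 1 ≤ i) (hin : i ≤ n) {x : ℝ} (h0 : 0 < x) (h1 : x < 1) :
    hfun n ω i x * (ω (i-1) * i * (1-x) + ω i * ((n:ℝ) - i + 1) * (x * hfun n ω (i-1) x))
      = ω i * ((n:ℝ) - i + 1) * (x * hfun n ω (i-1) x) := by
  have hii : i - 1 + 1 = i := by omega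
  have hi1n : i - 1 ≤ n := by omega
  rw [hfun_eq n ω hω hin h0 h1, hfun_eq n ω hω hi1n h0 h1, hii]
  have hD1 : 0 < ∑ k ∈ range i, ω k * bern n k x := by
    have := S_pos n ω hω hi1n h0 h1; rwa [hii] at this
  have hD2eq : ∑ k ∈ range (i+1), ω k * bern n k x
      = (∑ k ∈ range i, ω k * bern n k x) + ω i * bern n i x := Finset.sum_range_succ _ _
  have hD2 : 0 < ∑ k ∈ range (i+1), ω k * bern n k x := S_pos n ω hω hin h0 h1
  have hb := bern_ratio h1i hin x
  rw [hD2eq] at hD2 ⊢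
  field_simp
  linear_combination ((∑ k ∈ range i, ω k * bern n k x) * ω (i-1) * ω i) * hb


/-- general differential-recurrence relation for the `r`-th derivative of
`h^n_i` (`r ≥ 1`), with `(h^n_0)^{(k)} ≡ 0` for all `k ≥ 1`. -/
theorem hfun_higher_deriv_recurrence (n : ℕ) (hn : 1 ≤ n) (ω : ℕ → ℝ)
    (hω : ∀ k ≤ n, 0 < ω k) (r : ℕ) (hr : 1 ≤ r) :
    (∀ k, 1 ≤ k → ∀ s : ℝ, iteratedDeriv k (hfun n ω 0) s = 0)
    ∧ ∀ i, 1 ≤ i → i ≤ n → ∀ t : ℝ, 0 < t → t < 1 →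
        iteratedDeriv r (hfun n ω i) t *
            (ω (i - 1) * i * (1 - t) + ω i * t * ((n : ℝ) - i + 1) * hfun n ω (i - 1) t) =
          ω i * ((n : ℝ) - i + 1) *
              (t * iteratedDeriv r (hfun n ω (i - 1)) t
                + r * iteratedDeriv (r - 1) (hfun n ω (i - 1)) t
                - ∑ j ∈ Icc 1 r, (r.choose j : ℝ) * iteratedDeriv (r - j) (hfun n ω i) t *
                    (t * iteratedDeriv j (hfun n ω (i - 1)) t
                      + j * iteratedDeriv (j - 1) (hfun n ω (i - 1)) t))
            + ω (i - 1) * i * r * iteratedDeriv (r - 1) (hfun n ω i) t := by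
  constructor
  · intro k hk s
    obtain ⟨m, rfl⟩ : ∃ m, k = m + 1 := ⟨k - 1, by omega⟩
    have h0 : hfun n ω 0 = fun _ => 1 := by funext x; simp [hfun]
    rw [h0, myid_const 1 m]
  · intro i h1i hin t ht0 ht1
    have hs : IsOpen (Set.Ioo (0:ℝ) 1) := isOpen_Ioo
    have ht : t ∈ Set.Ioo (0:ℝ) 1 := ⟨ht0, ht1⟩
    have hi1n : i - 1 ≤ n := by omega
    have hh : ContDiffOn ℝ (⊤ : ℕ∞) (hfun n ω i) (Set.Ioo 0 1) := hfun_smooth n ω hω hin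
    have hp : ContDiffOn ℝ (⊤ : ℕ∞) (hfun n ω (i-1)) (Set.Ioo 0 1) := hfun_smooth n ω hω hi1n
    have hxid : ContDiffOn ℝ (⊤ : ℕ∞) (fun x : ℝ => x) (Set.Ioo (0:ℝ) 1) := contDiff_id.contDiffOn
    have hxp : ContDiffOn ℝ (⊤ : ℕ∞) (fun x => x * hfun n ω (i-1) x) (Set.Ioo (0:ℝ) 1) := hxid.mul hp
    have haff : ContDiffOn ℝ (⊤ : ℕ∞) (fun x : ℝ => ω (i-1) * ↑i * (1 - x)) (Set.Ioo (0:ℝ) 1) :=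
      (contDiff_const.mul (contDiff_const.sub contDiff_id)).contDiffOn
    have hsnd : ContDiffOn ℝ (⊤ : ℕ∞)
        (fun x => ω i * ((n:ℝ) - ↑i + 1) * (x * hfun n ω (i-1) x)) (Set.Ioo (0:ℝ) 1) :=
      contDiffOn_const.mul hxp
    set G : ℝ → ℝ :=
      fun x => ω (i-1) * ↑i * (1 - x) + ω i * ((n:ℝ) - ↑i + 1) * (x * hfun n ω (i-1) x)
      with hG_def
    have hG : ContDiffOn ℝ (⊤ : ℕ∞) G (Set.Ioo (0:ℝ) 1) := haff.add hsnd
    have hGt : G t = ω (i-1) * ↑i * (1 - t) + ω i * ((n:ℝ) - ↑i + 1) * (t * hfun n ω (i-1) t) :=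
      rfl
    -- the r-th derivative of the second piece (and of the RHS function)
    have ER : ∀ m : ℕ, iteratedDeriv (m+1)
          (fun x => ω i * ((n:ℝ) - ↑i + 1) * (x * hfun n ω (i-1) x)) t
        = ω i * ((n:ℝ) - ↑i + 1) * (t * iteratedDeriv (m+1) (hfun n ω (i-1)) t
            + ((m:ℝ)+1) * iteratedDeriv m (hfun n ω (i-1)) t) := by
      intro m
      have hcm := myconstmul hs hxp (ω i * ((n:ℝ) - ↑i + 1)) (m+1) t ht
      rw [hcm, myxmul hs hp m ht]
    -- derivatives of G
    have hGder : ∀ m : ℕ, iteratedDeriv (m+1) G t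
        = (if m = 0 then -(ω (i-1) * ↑i) else 0)
          + ω i * ((n:ℝ) - ↑i + 1) * (t * iteratedDeriv (m+1) (hfun n ω (i-1)) t
              + ((m:ℝ)+1) * iteratedDeriv m (hfun n ω (i-1)) t) := by
      intro m
      have hadd := myadd hs haff hsnd (m+1) t ht
      rw [hG_def, hadd, myaffine (ω (i-1) * ↑i) m t, ER m]
    -- key pointwise identity, eventually
    have ev : (fun x => G x * hfun n ω i x)
        =ᶠ[nhds t] fun x => ω i * ((n:ℝ) - ↑i + 1) * (x * hfun n ω (i-1) x) := by
      filter_upwards [hs.mem_nhds ht] with x hx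
      have := key_identity n ω hω h1i hin hx.1 hx.2
      simp only [hG_def]
      linarith [this]
    -- Leibniz expansion
    have EL := myleibniz hs hG hh r t ht
    have EQN : (∑ j ∈ range (r+1), (r.choose j : ℝ) * iteratedDeriv j G t *
          iteratedDeriv (r-j) (hfun n ω i) t)
        = ω i * ((n:ℝ) - ↑i + 1) * (t * iteratedDeriv r (hfun n ω (i-1)) t
            + (r:ℝ) * iteratedDeriv (r-1) (hfun n ω (i-1)) t) := by
      rw [← EL, myevent ev r]
      obtain ⟨m, rfl⟩ : ∃ m, r = m + 1 := ⟨r - 1, by omega⟩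
      rw [ER m]
      push_cast
      simp only [Nat.add_sub_cancel]
    -- peel off the j = 0 term
    have Epeel : (∑ j ∈ range (r+1), (r.choose j : ℝ) * iteratedDeriv j G t *
          iteratedDeriv (r-j) (hfun n ω i) t)
        = (∑ j ∈ range r, (r.choose (j+1) : ℝ) * iteratedDeriv (j+1) G t *
            iteratedDeriv (r-(j+1)) (hfun n ω i) t) + G t * iteratedDeriv r (hfun n ω i) t := by
      rw [Finset.sum_range_succ' _ r]
      simp [iteratedDeriv_zero]
    have Eterm : ∀ j ∈ range r, (r.choose (j+1) : ℝ) * iteratedDeriv (j+1) G t *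
          iteratedDeriv (r-(j+1)) (hfun n ω i) t
        = (if j = 0 then -(ω (i-1) * ↑i * (r.choose (j+1) : ℝ) *
              iteratedDeriv (r-(j+1)) (hfun n ω i) t) else 0)
          + ω i * ((n:ℝ) - ↑i + 1) * ((r.choose (j+1) : ℝ) *
              iteratedDeriv (r-(j+1)) (hfun n ω i) t *
              (t * iteratedDeriv (j+1) (hfun n ω (i-1)) t
                + ((j:ℝ)+1) * iteratedDeriv j (hfun n ω (i-1)) t)) := by
      intro j hj
      rw [hGder j]
      split_ifs with hj0 <;> ring
    have Eif : (∑ j ∈ range r, (if j = 0 then -(ω (i-1) * ↑i * (r.choose (j+1) : ℝ) *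
          iteratedDeriv (r-(j+1)) (hfun n ω i) t) else 0))
        = -(ω (i-1) * ↑i * (r:ℝ) * iteratedDeriv (r-1) (hfun n ω i) t) := by
      rw [Finset.sum_ite_eq' (range r) 0]
      simp [Finset.mem_range, hr, Nat.lt_of_lt_of_le Nat.zero_lt_one hr, Nat.choose_one_right]
    have hS : (∑ j ∈ Icc 1 r, (r.choose j : ℝ) * iteratedDeriv (r - j) (hfun n ω i) t *
          (t * iteratedDeriv j (hfun n ω (i - 1)) t
            + (j:ℝ) * iteratedDeriv (j - 1) (hfun n ω (i - 1)) t))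
        = ∑ j ∈ range r, ((r.choose (j+1) : ℝ) * iteratedDeriv (r-(j+1)) (hfun n ω i) t *
            (t * iteratedDeriv (j+1) (hfun n ω (i-1)) t
              + ((j:ℝ)+1) * iteratedDeriv j (hfun n ω (i-1)) t)) := by
      rw [← Finset.Ico_add_one_right_eq_Icc, Finset.sum_Ico_eq_sum_range]
      refine Finset.sum_congr (by norm_num) (fun j hj => ?_)
      have e : 1 + j = j + 1 := by omega
      rw [e]
      simp only [Nat.add_sub_cancel]
      push_cast
      ring
    rw [Epeel, Finset.sum_congr rfl Eterm, Finset.sum_add_distrib, Eif,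
      ← Finset.mul_sum] at EQN
    linear_combination EQN - iteratedDeriv r (hfun n ω i) t * hGt
      + (ω i * ((n:ℝ) - ↑i + 1)) * hS
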